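/- arXiv:1003.1224 — 2 statements merged into one kernel-verified Lean document; each statement's English description precedes it below -/
import Mathlib

section
/- Let u be a rich infinite word over a finite alphabet whose language is closed under reversal. Then for any factor w of u, the occurrences of w and of the reversal of w alternate in u; that is, between any two successive occurrences of w there is an occurrence of the reversal of w, and between any two successive occurrences of the reversal of w there is an occurrence of w. -/
open List

/-- The factor of `u` of length `n` starting at position `i`. -/
def word {A : Type*} (u : ℕ → A) (i n : ℕ) : List A :=
  (List.range n).map (fun j => u (i + j))

/-- `w` occurs in `u` at position `i`. -/
def OccursAt {A : Type*} (u : ℕ → A) (w : List A) (i : ℕ) : Prop :=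
  w = word u i w.length

/-- `w` is a factor of the infinite word `u`. -/
def IsFactor {A : Type*} (u : ℕ → A) (w : List A) : Prop :=
  ∃ i, OccursAt u w i

/-- Every letter of the alphabet occurs in `u`. -/
def AllLettersOccur {A : Type*} (u : ℕ → A) : Prop :=
  ∀ a : A, ∃ i, u i = a

/-- The language of `u` is closed under reversal. -/
def ClosedUnderReversal {A : Type*} (u : ℕ → A) : Prop :=
  ∀ w : List A, IsFactor u w → IsFactor u w.reverse

/-- `u` is uniformly recurrent: every factor occurs in every window of some
bounded length. -/
def UniformlyRecurrent {A : Type*} (u : ℕ → A) : Prop :=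
  ∀ w : List A, IsFactor u w → ∃ N : ℕ, ∀ i : ℕ, ∃ j : ℕ,
    i ≤ j ∧ j < i + N ∧ OccursAt u w j

/-- Factor complexity: the number of factors of `u` of length `n`. -/
noncomputable def complexity {A : Type*} (u : ℕ → A) (n : ℕ) : ℕ :=
  Set.ncard {w : List A | w.length = n ∧ IsFactor u w}

/-- Palindromic complexity: the number of palindromic factors of `u` of
length `n`. -/
noncomputable def palComplexity {A : Type*} (u : ℕ → A) (n : ℕ) : ℕ :=
  Set.ncard {w : List A | w.length = n ∧ IsFactor u w ∧ w.reverse = w}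

/-- The number of distinct palindromic factors of a finite word
(the empty word included). -/
noncomputable def palCount {A : Type*} (w : List A) : ℕ :=
  Set.ncard {v : List A | v <:+: w ∧ v.reverse = v}

/-- `u` is rich in palindromes. -/
def Rich {A : Type*} (u : ℕ → A) : Prop :=
  ∀ w : List A, IsFactor u w → palCount w = w.length + 1

/-- `j < k` are two successive occurrences of `w` in `u`. -/
def SuccOccurrences {A : Type*} (u : ℕ → A) (w : List A) (j k : ℕ) : Prop :=
  OccursAt u w j ∧ OccursAt u w k ∧ j < k ∧
    ∀ l : ℕ, j < l → l < k → ¬ OccursAt u w l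

/-- The set of return words of the factor `w` in `u`. -/
def returnWords {A : Type*} (u : ℕ → A) (w : List A) : Set (List A) :=
  {v | ∃ j k : ℕ, SuccOccurrences u w j k ∧ v = word u j (k - j)}

/-- Left extensions of `w` in `u`. -/
def Lext {A : Type*} (u : ℕ → A) (w : List A) : Set A :=
  {a | IsFactor u (a :: w)}

/-- Right extensions of `w` in `u`. -/
def Rext {A : Type*} (u : ℕ → A) (w : List A) : Set A :=
  {b | IsFactor u (w ++ [b])}

/-- Bilateral extensions of `w` in `u`. -/
def Bext {A : Type*} (u : ℕ → A) (w : List A) : Set (A × A) :=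
  {p | IsFactor u (p.1 :: (w ++ [p.2]))}

/-- Palindromic extensions of a (palindromic) factor `w` of `u`. -/
def Pext {A : Type*} (u : ℕ → A) (w : List A) : Set (List A) :=
  {v | ∃ a : A, v = a :: (w ++ [a]) ∧ IsFactor u v}

/-- `w` is a bispecial factor of `u`. -/
def Bispecial {A : Type*} (u : ℕ → A) (w : List A) : Prop :=
  IsFactor u w ∧ 2 ≤ Set.ncard (Lext u w) ∧ 2 ≤ Set.ncard (Rext u w)

/-- The bilateral order of a factor `w` of `u`. -/
noncomputable def bilateralOrder {A : Type*} (u : ℕ → A) (w : List A) : ℤ :=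
  (Set.ncard (Bext u w) : ℤ) - Set.ncard (Rext u w) - Set.ncard (Lext u w) + 1

/-- `u` is eventually periodic. -/
def EventuallyPeriodic {A : Type*} (u : ℕ → A) : Prop :=
  ∃ p : ℕ, 0 < p ∧ ∃ N : ℕ, ∀ n : ℕ, N ≤ n → u (n + p) = u n

/-- `u` is aperiodic. -/
def Aperiodic {A : Type*} (u : ℕ → A) : Prop :=
  ¬ EventuallyPeriodic u

/-- `u` is (1-)balanced. -/
def IsBalanced {A : Type*} [DecidableEq A] (u : ℕ → A) : Prop :=
  ∀ a : A, ∀ w v : List A, IsFactor u w → IsFactor u v → w.length = v.length →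
    |(w.count a : ℤ) - (v.count a : ℤ)| ≤ 1

lemma word_length {A : Type*} (u : ℕ → A) (i n : ℕ) : (word u i n).length = n := by
  simp [word]

lemma word_append {A : Type*} (u : ℕ → A) (i m n : ℕ) :
    word u i (m + n) = word u i m ++ word u (i + m) n := by
  simp [word, List.range_add, List.map_map, Function.comp_def, add_assoc]

lemma prefix_word {A : Type*} {u : ℕ → A} {i n : ℕ} {v : List A}
    (h : v <+: word u i n) : v = word u i v.length := by
  obtain ⟨t, ht⟩ := h
  have hlen : v.length + t.length = n := by
    have := congrArg List.length ht
    simpa [word_length] using this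
  have h2 : word u i n = word u i v.length ++ word u (i + v.length) t.length := by
    rw [← word_append, hlen]
  rw [h2] at ht
  exact (List.append_inj ht (by simp [word_length])).1

lemma infix_word {A : Type*} {u : ℕ → A} {i n : ℕ} {v : List A}
    (h : v <:+: word u i n) : ∃ t, t + v.length ≤ n ∧ v = word u (i + t) v.length := by
  obtain ⟨s, t, hst⟩ := h
  have hlen : s.length + v.length + t.length = n := by
    have := congrArg List.length hst
    simp [word_length] at this
    omega
  refine ⟨s.length, by omega, ?_⟩
  have h2 : word u i n
      = word u i s.length ++ (word u (i + s.length) v.length ++ word u (i + s.length + v.length) t.length) := by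
    rw [← word_append, ← word_append]
    congr 1
    omega
  rw [h2, ← List.append_assoc] at hst
  have h3 := List.append_inj hst (by simp [word_length])
  exact (List.append_inj h3.1 (by simp [word_length])).2

lemma suffix_word {A : Type*} {u : ℕ → A} {i n : ℕ} {v : List A}
    (h : v <:+ word u i n) : v.length ≤ n ∧ v = word u (i + (n - v.length)) v.length := by
  obtain ⟨s, hs⟩ := h
  have hlen : s.length + v.length = n := by
    have := congrArg List.length hs
    simpa [word_length] using this
  have : v <:+: word u i n := ⟨s, [], by simpa using hs⟩
  obtain ⟨t, ht, hv⟩ := infix_word this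
  -- t must equal s.length
  have h2 : word u i n = word u i s.length ++ word u (i + s.length) v.length := by
    rw [← word_append, hlen]
  rw [h2] at hs
  refine ⟨by omega, ?_⟩
  have := (List.append_inj hs (by simp [word_length])).2
  rw [this]
  simp only [word_length]
  congr 2
  omega

lemma suffix_of_suffix_le {A : Type*} {v p f : List A}
    (hv : v <:+ f) (hp : p <:+ f) (hle : v.length ≤ p.length) : v <:+ p := by
  rw [← List.reverse_prefix] at hv hp ⊢
  exact List.prefix_of_prefix_length_le hv hp (by simpa using hle)

lemma infix_concat' {A : Type*} {v g : List A} {a : A}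
    (h : v <:+: g ++ [a]) : v <:+: g ∨ v <:+ g ++ [a] := by
  obtain ⟨s, t, hst⟩ := h
  rcases List.eq_nil_or_concat t with rfl | ⟨t', b, rfl⟩
  · right; exact ⟨s, by simpa using hst⟩
  · left
    have hst' : (s ++ v ++ t') ++ [b] = g ++ [a] := by simpa using hst
    have := List.append_inj' hst' rfl
    exact ⟨s, t', this.1⟩

lemma factor_of_infix {A : Type*} {u : ℕ → A} {f v : List A}
    (hf : IsFactor u f) (h : v <:+: f) : IsFactor u v := by
  obtain ⟨i, hi⟩ := hf
  rw [hi] at h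
  obtain ⟨t, _, hv⟩ := infix_word h
  exact ⟨i + t, hv⟩

lemma uniocc {A : Type*} {u : ℕ → A} (hrich : Rich u) {f g p : List A} {a : A}
    (hfa : f = g ++ [a]) (hf : IsFactor u f) (hps : p <:+ f) (hpal : p.reverse = p)
    (hmax : ∀ q : List A, q <:+ f → q.reverse = q → q.length ≤ p.length) :
    ¬ p <:+: g := by
  subst hfa
  intro hpg
  have hg : IsFactor u g := factor_of_infix hf (List.prefix_append g [a]).isInfix
  have hseteq : {v : List A | v <:+: g ++ [a] ∧ v.reverse = v}
      = {v : List A | v <:+: g ∧ v.reverse = v} := by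
    ext v
    constructor
    · rintro ⟨hv, hvp⟩
      rcases infix_concat' hv with h | h
      · exact ⟨h, hvp⟩
      · have hvs : v <:+ p := suffix_of_suffix_le h hps (hmax v h hvp)
        exact ⟨hvs.isInfix.trans hpg, hvp⟩
    · rintro ⟨hv, hvp⟩
      exact ⟨hv.trans (List.prefix_append g [a]).isInfix, hvp⟩
  have h1 := hrich _ hf
  have h2 := hrich _ hg
  unfold palCount at h1 h2
  rw [hseteq] at h1
  simp only [List.length_append, List.length_singleton] at h1
  omega

lemma key {A : Type*} {u : ℕ → A} (hrich : Rich u) (w : List A) {j k : ℕ}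
    (hj : OccursAt u w j) (hk : OccursAt u w k) (hjk : j < k) :
    ∃ l, j ≤ l ∧ l ≤ k ∧ OccursAt u w.reverse l := by
  set m := k - j + w.length with hm
  have hwj : w = word u j w.length := hj
  have hwk : w = word u k w.length := hk
  -- the palindromic suffixes of f := word u j m
  have hfin : {q : List A | q <:+ word u j m ∧ q.reverse = q}.Finite :=
    ((word u j m).tails.finite_toSet).subset
      (fun q hq => (List.mem_tails _ _).2 hq.1)
  obtain ⟨p, ⟨hps, hpal⟩, hmaxle⟩ :=
    Set.exists_max_image _ List.length hfin ⟨[], by simp⟩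
  have hmax : ∀ q : List A, q <:+ word u j m → q.reverse = q → q.length ≤ p.length :=
    fun q h1 h2 => hmaxle q ⟨h1, h2⟩
  obtain ⟨hple, hpw⟩ := suffix_word hps
  have hffac : IsFactor u (word u j m) := ⟨j, by rw [OccursAt, word_length]⟩
  -- w is a suffix of f
  have hjk' : j + (k - j) = k := by omega
  have hwsuf : w <:+ word u j m := by
    refine ⟨word u j (k - j), ?_⟩
    conv_rhs => rw [hm, word_append, hjk', ← hwk]
  by_cases hcase : w.length ≤ p.length
  · have hwp : w <:+ p := suffix_of_suffix_le hwsuf hps hcase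
    have hrp : w.reverse <+: p := by
      rw [← hpal]
      exact List.reverse_prefix.2 hwp
    rw [hpw] at hrp
    have hocc : w.reverse = word u (j + (m - p.length)) w.reverse.length :=
      prefix_word hrp
    exact ⟨j + (m - p.length), by omega, by omega, hocc⟩
  · exfalso
    push_neg at hcase
    have hm1 : 1 ≤ m := by omega
    have hfg : word u j m = word u j (m - 1) ++ [u (j + (m - 1))] := by
      conv_lhs => rw [show m = (m - 1) + 1 by omega]
      rw [word_append]
      simp [word, List.range_succ]
    have hpw' : p <:+ w := suffix_of_suffix_le hps hwsuf (le_of_lt hcase)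
    have hwg : w <+: word u j (m - 1) := by
      have heq : word u j (m - 1) = word u j w.length ++ word u (j + w.length) (m - 1 - w.length) := by
        rw [← word_append]
        congr 1
        omega
      rw [heq, ← hwj]
      exact List.prefix_append _ _
    have hpg : p <:+: word u j (m - 1) := hpw'.isInfix.trans hwg.isInfix
    exact uniocc hrich hfg hffac hps hpal hmax hpg

/-- In a rich word with language closed under reversal, the
occurrences of any factor `w` and of its reversal alternate. -/
theorem stmt4 {A : Type*} [Fintype A] (u : ℕ → A)
    (hall : AllLettersOccur u)
    (hrich : Rich u)
    (hcur : ClosedUnderReversal u) :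
    ∀ w : List A, IsFactor u w →
      (∀ j k : ℕ, SuccOccurrences u w j k →
        ∃ l : ℕ, j ≤ l ∧ l ≤ k ∧ OccursAt u w.reverse l) ∧
      (∀ j k : ℕ, SuccOccurrences u w.reverse j k →
        ∃ l : ℕ, j ≤ l ∧ l ≤ k ∧ OccursAt u w l) := by
  intro w _hw
  constructor
  · rintro j k ⟨hj, hk, hjk, -⟩
    exact key hrich w hj hk hjk
  · rintro j k ⟨hj, hk, hjk, -⟩
    obtain ⟨l, h1, h2, h3⟩ := key hrich w.reverse hj hk hjk
    rw [List.reverse_reverse] at h3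
    exact ⟨l, h1, h2, h3⟩
end

section
/- Let u be an infinite word over a finite alphabet A with k = #A letters, whose language is closed under reversal and whose factor complexity satisfies C(n) = (k−1)n + 1 for all n ∈ ℕ. Then the palindromic complexity of u satisfies P(n) + P(n+1) = k + 1 for all n ∈ ℕ if and only if every bispecial factor w of u satisfies: if w is non-palindromic then b(w) = 0, and if w is a palindrome then b(w) = #Pext(w) − 1. -/
open List

/-!
Counting the factors of length `n + 2` through their central factor of length `n` gives
`∑_{|w| = n} b(w) = C(n+2) - 2 C(n+1) + C(n)`, which vanishes because `C` is affine, and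
`P(n+2) - P(n) = ∑ (#Pext(w) - 1)` over the palindromic factors `w` of length `n`. So the excess
`e(w) = b(w) - [w palindrome] (#Pext(w) - 1)` sums to `P(n) - P(n+2)` over the factors of
length `n`; it vanishes on factors that are not bispecial, so the condition on bispecial factors
says that `e` vanishes identically.

If `e = 0`, then `P(n+2) = P(n)`, and `P(0) + P(1) = 1 + k`. Conversely, if
`P(n) + P(n+1) = k + 1`, the Rauzy graph of order `N` in which every factor is identified with
its reversal and loops are removed is connected (closure under reversal makes `u` recurrent)
and has one vertex more than it has edges: it is a tree. The classes of the extensions `a w b`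
are edges of this tree with endpoints among the classes of the `a w` and `w b`, and a nonempty
set of edges of a tree has more endpoints than edges. This gives `e(w) ≤ 0` for every factor,
and since the excesses sum to `0` they all vanish.
-/
open scoped Classical

theorem List.exists_eq_cons_append_singleton {A : Type*} {x : List A} {n : ℕ}
    (h : x.length = n + 2) : ∃ a w b, x = a :: (w ++ [b]) ∧ w.length = n := by
  obtain _ | ⟨a, t⟩ := x
  · simp at h
  have ht : t ≠ [] := by rintro rfl; simp at h
  have hlen : t.length = n + 1 := by simpa using h
  exact ⟨a, t.dropLast, t.getLast ht, by rw [List.dropLast_append_getLast], by simp [hlen]⟩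

theorem List.eq_replicate_of_cons_eq_append_singleton {A : Type*} {a b : A} {w : List A}
    (h : a :: w = w ++ [b]) : w = List.replicate w.length a ∧ a = b := by
  induction w generalizing a with
  | nil => simpa using h
  | cons c t ih =>
    obtain ⟨rfl, h⟩ : a = c ∧ c :: t = t ++ [b] := by simpa using h
    obtain ⟨ht, rfl⟩ := ih h
    exact ⟨by rw [List.length_cons, List.replicate_succ, ← ht], rfl⟩

theorem Finset.card_eq_sum_ncard_of_bijective {γ δ ε : Type*} {s : Finset γ}
    {t : Finset δ} {e : δ → Set ε} (he : ∀ w, (e w).Finite) (f : δ → ε → γ)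
    (hmaps : ∀ w ∈ t, ∀ a ∈ e w, f w a ∈ s)
    (hinj : ∀ w ∈ t, ∀ a ∈ e w, ∀ w' ∈ t, ∀ a' ∈ e w',
      f w a = f w' a' → w = w' ∧ a = a')
    (hsurj : ∀ x ∈ s, ∃ w ∈ t, ∃ a ∈ e w, f w a = x) :
    s.card = ∑ w ∈ t, (e w).ncard := by
  rw [Finset.sum_congr rfl fun w _ => Set.ncard_eq_toFinset_card (e w) (he w),
    ← Finset.card_sigma]
  symm
  refine Finset.card_bij (fun p _ => f p.1 p.2) ?_ ?_ ?_
  · rintro ⟨w, a⟩ hp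
    simp only [Finset.mem_sigma, Set.Finite.mem_toFinset] at hp
    exact hmaps w hp.1 a hp.2
  · rintro ⟨w, a⟩ hp ⟨w', a'⟩ hp' h
    simp only [Finset.mem_sigma, Set.Finite.mem_toFinset] at hp hp'
    obtain ⟨rfl, rfl⟩ := hinj w hp.1 a hp.2 w' hp'.1 a' hp'.2 h
    rfl
  · intro x hx
    obtain ⟨w, hw, a, ha, rfl⟩ := hsurj x hx
    exact ⟨⟨w, a⟩, by simp [hw, ha], rfl⟩

section CutConnected

variable {α β : Type*} [DecidableEq α]

/-- Connectedness of the multigraph on `V` whose edge `e ∈ E` joins the two points of `ends e`. -/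
def CutConnected (V : Finset α) (E : Finset β) (ends : β → Sym2 α) : Prop :=
  ∀ S ⊆ V, S.Nonempty → S ≠ V →
    ∃ e ∈ E, ∃ x ∈ S, ∃ y ∈ V \ S, ends e = s(x, y)

namespace CutConnected

variable {V : Finset α} {E : Finset β} {ends : β → Sym2 α}

theorem image (h : CutConnected V E ends) (m : α → α) :
    CutConnected (V.image m) (E.filter fun e => ¬ ((ends e).map m).IsDiag)
      (fun e => (ends e).map m) := by
  intro S' hS'V ⟨x', hx'⟩ hS'ne
  obtain ⟨y', hy'V, hy'S⟩ := Finset.not_subset.1 fun h' => hS'ne (hS'V.antisymm h')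
  obtain ⟨x, hxV, rfl⟩ := Finset.mem_image.1 (hS'V hx')
  obtain ⟨y, hyV, rfl⟩ := Finset.mem_image.1 hy'V
  obtain ⟨e, he, a, ha, b, hb, hab⟩ :=
    h (V.filter fun z => m z ∈ S') (Finset.filter_subset _ _)
      ⟨x, Finset.mem_filter.2 ⟨hxV, hx'⟩⟩
      fun hS => by rw [← hS] at hyV; exact hy'S (Finset.mem_filter.1 hyV).2
  simp only [Finset.mem_sdiff, Finset.mem_filter, not_and] at ha hb
  have hne : m a ≠ m b := fun h => hb.2 hb.1 (h ▸ ha.2)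
  refine ⟨e, Finset.mem_filter.2 ⟨he, ?_⟩, m a, ha.2, m b,
    Finset.mem_sdiff.2 ⟨Finset.mem_image_of_mem m hb.1, hb.2 hb.1⟩, ?_⟩
  · rwa [hab, Sym2.map_mk, Sym2.mk_isDiag_iff]
  · simp only [hab, Sym2.map_mk]

theorem card_le_card_add_one (h : CutConnected V E ends) : V.card ≤ E.card + 1 := by
  induction hn : V.card using Nat.strong_induction_on generalizing V E ends with
  | _ n ih =>
    obtain hn1 | hn1 := Nat.lt_or_ge n 2
    · omega
    obtain ⟨v, hv⟩ := Finset.card_pos.1 (by omega : 0 < V.card)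
    obtain ⟨e₀, he₀, x, hx, y, hy, hxy⟩ := h {v} (Finset.singleton_subset_iff.2 hv)
      (Finset.singleton_nonempty v) fun hV => by rw [← hV] at hn; simp at hn; omega
    rw [Finset.mem_singleton] at hx
    subst hx
    obtain ⟨hyV, hyx⟩ := Finset.mem_sdiff.1 hy
    rw [Finset.mem_singleton] at hyx
    let m : α → α := fun z => if z = x then y else z
    have hV' : V.image m = V.erase x := by
      ext z
      simp only [Finset.mem_image, Finset.mem_erase, m]
      constructor
      · rintro ⟨a, ha, rfl⟩
        split_ifs with hax
        · exact ⟨hyx, hyV⟩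
        · exact ⟨hax, ha⟩
      · exact fun ⟨hzx, hz⟩ => ⟨z, hz, if_neg hzx⟩
    have hE' : (E.filter fun e => ¬ ((ends e).map m).IsDiag) ⊆ E.erase e₀ := by
      intro e he
      obtain ⟨he, hdiag⟩ := Finset.mem_filter.1 he
      refine Finset.mem_erase.2 ⟨fun he₀' => hdiag ?_, he⟩
      simp [he₀', hxy, m, Sym2.map_mk]
    have h1 := ih _ (by rw [hV', Finset.card_erase_of_mem hv]; omega) (h.image m) rfl
    rw [hV', Finset.card_erase_of_mem hv] at h1
    have h2 := (Finset.card_le_card hE').trans_eq (Finset.card_erase_of_mem he₀)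
    have := Finset.card_pos.2 ⟨e₀, he₀⟩
    omega

theorem card_add_one_le_card_of_ends_subset (h : CutConnected V E ends)
    (hE : E.card + 1 ≤ V.card)
    {F : Finset β} (hFE : F ⊆ E) (hF : F.Nonempty) {W : Finset α} (hWV : W ⊆ V)
    (hW : ∀ e ∈ F, ∀ x ∈ ends e, x ∈ W) : F.card + 1 ≤ W.card := by
  obtain ⟨e₁, he₁⟩ := hF
  have hw₀ := hW e₁ he₁ _ (Sym2.out_fst_mem (ends e₁))
  set w₀ := (ends e₁).out.1
  let m : α → α := fun z => if z ∈ W then w₀ else z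
  have hV' : insert w₀ (V \ W) ⊆ V.image m := by
    intro z hz
    rcases Finset.mem_insert.1 hz with rfl | hz
    · exact Finset.mem_image.2 ⟨w₀, hWV hw₀, if_pos hw₀⟩
    · obtain ⟨hzV, hzW⟩ := Finset.mem_sdiff.1 hz
      exact Finset.mem_image.2 ⟨z, hzV, if_neg hzW⟩
  have hE' : (E.filter fun e => ¬ ((ends e).map m).IsDiag) ⊆ E \ F := by
    intro e he
    obtain ⟨he, hdiag⟩ := Finset.mem_filter.1 he
    refine Finset.mem_sdiff.2 ⟨he, fun heF => hdiag ?_⟩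
    have hends := hW e heF
    generalize ends e = z at hends
    induction z using Sym2.ind with
    | _ a b => simp_all [m, Sym2.map_mk]
  -- Contracting `W` to the vertex `w₀` deletes the edges of `F` and keeps the graph connected.
  have h1 := Finset.card_le_card hV'
  have h2 := Finset.card_le_card hE'
  have h3 := (h.image m).card_le_card_add_one
  rw [Finset.card_insert_of_notMem (fun h => (Finset.mem_sdiff.1 h).2 hw₀),
    Finset.card_sdiff_of_subset hWV] at h1
  rw [Finset.card_sdiff_of_subset hFE] at h2
  have := Finset.card_le_card hWV
  have := Finset.card_le_card hFE
  omega

end CutConnected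

end CutConnected

section Factors

variable {A : Type*} {u : ℕ → A}

theorem length_word (u : ℕ → A) (i n : ℕ) : (word u i n).length = n := by
  simp [word]

theorem word_add (u : ℕ → A) (i m n : ℕ) :
    word u i (m + n) = word u i m ++ word u (i + m) n := by
  simp [word, List.range_add, Function.comp_def, add_assoc]

theorem occursAt_word (u : ℕ → A) (i n : ℕ) : OccursAt u (word u i n) i := by
  rw [OccursAt, length_word]

theorem isFactor_word (u : ℕ → A) (i n : ℕ) : IsFactor u (word u i n) :=
  ⟨i, occursAt_word u i n⟩

theorem dropLast_word (u : ℕ → A) (i n : ℕ) : (word u i (n + 1)).dropLast = word u i n := by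
  rw [word_add, show word u (i + n) 1 = [u (i + n)] by simp [word], List.dropLast_concat]

theorem tail_word (u : ℕ → A) (i n : ℕ) : (word u i (n + 1)).tail = word u (i + 1) n := by
  rw [add_comm n, word_add, show word u i 1 = [u i] by simp [word]]
  rfl

theorem occursAt_append_iff {v w : List A} {i : ℕ} :
    OccursAt u (v ++ w) i ↔ OccursAt u v i ∧ OccursAt u w (i + v.length) := by
  simp only [OccursAt, List.length_append, word_add]
  exact ⟨fun h => List.append_inj h (length_word u i _).symm,
    fun ⟨hv, hw⟩ => congrArg₂ (· ++ ·) hv hw⟩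

theorem IsFactor.of_infix {v w : List A} (hw : IsFactor u w) (h : v <:+: w) :
    IsFactor u v := by
  obtain ⟨i, hi⟩ := hw
  obtain ⟨s, t, rfl⟩ := h
  exact ⟨i + s.length, (occursAt_append_iff.1 (occursAt_append_iff.1 hi).1).2⟩

theorem IsFactor.exists_append_singleton {w : List A} (hw : IsFactor u w) :
    ∃ b, IsFactor u (w ++ [b]) := by
  obtain ⟨i, hi⟩ := hw
  refine ⟨u (i + w.length), i, occursAt_append_iff.2 ⟨hi, ?_⟩⟩
  simp [OccursAt, word]

theorem isFactor_reverse_iff (hcur : ClosedUnderReversal u) {w : List A} :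
    IsFactor u w.reverse ↔ IsFactor u w :=
  ⟨fun h => by simpa using hcur _ h, hcur w⟩

theorem IsFactor.exists_cons (hcur : ClosedUnderReversal u) {w : List A}
    (hw : IsFactor u w) : ∃ a, IsFactor u (a :: w) := by
  obtain ⟨a, ha⟩ := ((isFactor_reverse_iff hcur).2 hw).exists_append_singleton
  exact ⟨a, by simpa using hcur _ ha⟩

theorem exists_occursAt_ge (hcur : ClosedUnderReversal u) {y : List A} (hy : IsFactor u y)
    (M : ℕ) : ∃ j, M ≤ j ∧ OccursAt u y j := by
  obtain ⟨i, hi⟩ := (isFactor_reverse_iff hcur).2 hy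
  have hz : OccursAt u (y.reverse ++ word u (i + y.length) M) i :=
    occursAt_append_iff.2 ⟨hi, by simpa using occursAt_word u (i + y.length) M⟩
  obtain ⟨j, hj⟩ := hcur _ ⟨i, hz⟩
  rw [List.reverse_append, List.reverse_reverse, occursAt_append_iff] at hj
  exact ⟨j + M, by omega, by simpa [length_word] using hj.2⟩

end Factors

section Counting

variable {A : Type*} [Finite A] (u : ℕ → A)

noncomputable def factors (n : ℕ) : Finset (List A) :=
  Set.Finite.toFinset (s := {w | w.length = n ∧ IsFactor u w})
    ((List.finite_length_eq A n).subset fun _ hw => hw.1)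

variable {u}

@[simp] theorem mem_factors {n : ℕ} {w : List A} :
    w ∈ factors u n ↔ w.length = n ∧ IsFactor u w :=
  Set.Finite.mem_toFinset _

theorem complexity_eq_card (n : ℕ) : complexity u n = (factors u n).card :=
  Set.ncard_eq_toFinset_card _ _

theorem palComplexity_eq_card (n : ℕ) :
    palComplexity u n = ((factors u n).filter fun w => w.reverse = w).card := by
  rw [palComplexity, ← Set.ncard_coe_finset]
  congr
  ext w
  simp [and_assoc]

theorem card_factors_succ_eq_sum_rext (n : ℕ) :
    (factors u (n + 1)).card = ∑ w ∈ factors u n, (Rext u w).ncard := by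
  refine Finset.card_eq_sum_ncard_of_bijective (fun _ => Set.toFinite _)
    (fun w b => w ++ [b]) ?_ ?_ ?_
  · intro w hw b hb
    exact mem_factors.2 ⟨by simp [(mem_factors.1 hw).1], hb⟩
  · intro w _ b _ w' _ b' _ h
    simpa using h
  · intro x hx
    obtain ⟨hlen, hx⟩ := mem_factors.1 hx
    have hne : x ≠ [] := by rintro rfl; simp at hlen
    refine ⟨x.dropLast, mem_factors.2 ⟨by simp [hlen], hx.of_infix x.dropLast_prefix.isInfix⟩,
      x.getLast hne, ?_, x.dropLast_append_getLast hne⟩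
    rwa [Rext, Set.mem_ofPred_eq, List.dropLast_append_getLast]

theorem card_factors_succ_eq_sum_lext (n : ℕ) :
    (factors u (n + 1)).card = ∑ w ∈ factors u n, (Lext u w).ncard := by
  refine Finset.card_eq_sum_ncard_of_bijective (fun _ => Set.toFinite _)
    (fun w a => a :: w) ?_ ?_ ?_
  · intro w hw a ha
    exact mem_factors.2 ⟨by simp [(mem_factors.1 hw).1], ha⟩
  · intro w _ a _ w' _ a' _ h
    simpa [and_comm] using h
  · rintro (_ | ⟨a, w⟩) hx <;> obtain ⟨hlen, hx⟩ := mem_factors.1 hx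
    · simp at hlen
    · refine ⟨w, mem_factors.2 ⟨by simpa using hlen, ?_⟩, a, hx, rfl⟩
      exact hx.of_infix (List.suffix_cons a w).isInfix

theorem card_factors_add_two_eq_sum_bext (n : ℕ) :
    (factors u (n + 2)).card = ∑ w ∈ factors u n, (Bext u w).ncard := by
  refine Finset.card_eq_sum_ncard_of_bijective (fun _ => Set.toFinite _)
    (fun w p => p.1 :: (w ++ [p.2])) ?_ ?_ ?_
  · intro w hw p hp
    exact mem_factors.2 ⟨by simp [(mem_factors.1 hw).1], hp⟩
  · rintro w _ ⟨a, b⟩ _ w' _ ⟨a', b'⟩ _ h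
    simpa [and_comm, and_assoc, and_left_comm] using h
  · intro x hx
    obtain ⟨hlen, hx⟩ := mem_factors.1 hx
    obtain ⟨a, w, b, rfl, hw⟩ := List.exists_eq_cons_append_singleton hlen
    exact ⟨w, mem_factors.2 ⟨hw, hx.of_infix ⟨[a], [b], rfl⟩⟩, (a, b), hx, rfl⟩

theorem palComplexity_add_two (n : ℕ) :
    palComplexity u (n + 2) =
      ∑ w ∈ (factors u n).filter (fun w => w.reverse = w), (Pext u w).ncard := by
  rw [palComplexity_eq_card]
  refine Finset.card_eq_sum_ncard_of_bijective
    (fun w => (List.finite_length_eq A (w.length + 2)).subset (by rintro _ ⟨a, rfl, -⟩; simp))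
    (fun _ v => v) ?_ ?_ ?_
  · rintro w hw _ ⟨a, rfl, hv⟩
    simp only [Finset.mem_filter, mem_factors] at hw ⊢
    simp [hw.1.1, hv, hw.2]
  · rintro w _ _ ⟨a, rfl, -⟩ w' _ _ ⟨a', rfl, -⟩ h
    exact ⟨(List.append_inj' (List.cons.inj h).2 rfl).1, h⟩
  · intro x hx
    simp only [Finset.mem_filter, mem_factors] at hx
    obtain ⟨⟨hlen, hx⟩, hpal⟩ := hx
    obtain ⟨a, w, b, rfl, hw⟩ := List.exists_eq_cons_append_singleton hlen
    obtain ⟨rfl, hwpal, -⟩ : b = a ∧ w.reverse = w ∧ a = b := by simpa using hpal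
    exact ⟨w, by simp [hw, hwpal, hx.of_infix ⟨[b], [b], rfl⟩], _, ⟨b, rfl, hx⟩, rfl⟩

end Counting

section Extensions

variable {A : Type*} {u : ℕ → A} {w : List A}

theorem mem_lext_of_mem_bext {p : A × A} (hp : p ∈ Bext u w) : p.1 ∈ Lext u w :=
  IsFactor.of_infix hp ⟨[], [p.2], by simp⟩

theorem mem_rext_of_mem_bext {p : A × A} (hp : p ∈ Bext u w) : p.2 ∈ Rext u w :=
  IsFactor.of_infix hp (List.suffix_cons _ _).isInfix

theorem lext_nonempty (hcur : ClosedUnderReversal u) (hw : IsFactor u w) :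
    (Lext u w).Nonempty :=
  hw.exists_cons hcur

theorem ncard_bext_eq_ncard_pext_add [Finite A] (w : List A) :
    (Bext u w).ncard =
      (Pext u w).ncard + ((Set.toFinite (Bext u w)).toFinset.filter fun p => p.1 ≠ p.2).card := by
  set B := (Set.toFinite (Bext u w)).toFinset
  have hPext :
      Pext u w = (fun p : A × A => p.1 :: (w ++ [p.2])) '' ↑(B.filter fun p => p.1 = p.2) := by
    ext v
    simp only [Pext, B, Bext, Set.mem_ofPred_eq, Finset.coe_filter, Set.Finite.mem_toFinset,
      Set.mem_image, Prod.exists]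
    constructor
    · rintro ⟨a, rfl, h⟩
      exact ⟨a, a, ⟨h, rfl⟩, rfl⟩
    · rintro ⟨a, _, ⟨h, rfl⟩, rfl⟩
      exact ⟨a, rfl, h⟩
  rw [hPext, Set.ncard_image_of_injective _ fun p q h => Prod.ext_iff.2 (by simpa using h),
    Set.ncard_coe_finset, Finset.card_filter_add_card_filter_not, Set.ncard_eq_toFinset_card]

variable (hcur : ClosedUnderReversal u)
include hcur

theorem lext_reverse : Lext u w.reverse = Rext u w := by
  ext a
  simp [Lext, Rext, ← isFactor_reverse_iff hcur (w := a :: w.reverse)]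

theorem rext_reverse : Rext u w.reverse = Lext u w := by
  simpa using (lext_reverse hcur (w := w.reverse)).symm

theorem bext_reverse : Bext u w.reverse = Prod.swap ⁻¹' Bext u w := by
  ext ⟨a, b⟩
  simp [Bext, ← isFactor_reverse_iff hcur (w := a :: (w.reverse ++ [b]))]

theorem lext_eq_rext_of_palindrome (hpal : w.reverse = w) : Lext u w = Rext u w := by
  rw [← lext_reverse hcur, hpal]

theorem bilateralOrder_reverse : bilateralOrder u w.reverse = bilateralOrder u w := by
  rw [bilateralOrder, bilateralOrder, lext_reverse hcur, rext_reverse hcur, bext_reverse hcur,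
    ← Set.image_swap_eq_preimage_swap, Set.ncard_image_of_injective _ Prod.swap_injective]
  ring

theorem bext_eq_image_of_lext_eq_singleton {c : A} (h : Lext u w = {c}) :
    Bext u w = Prod.mk c '' Rext u w := by
  ext ⟨a, b⟩
  constructor
  · intro hab
    have ha : a ∈ Lext u w := mem_lext_of_mem_bext hab
    rw [h, Set.mem_singleton_iff] at ha
    exact ⟨b, mem_rext_of_mem_bext hab, by rw [ha]⟩
  · rintro ⟨b, hb, hab⟩
    obtain ⟨rfl, rfl⟩ := Prod.mk.inj hab
    obtain ⟨a, ha⟩ := IsFactor.exists_cons hcur hb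
    have : (a, b) ∈ Bext u w := ha
    have ha' : a = c := by simpa [h] using mem_lext_of_mem_bext this
    rwa [← ha']

theorem bilateralOrder_eq_zero_of_lext_eq_singleton {c : A} (h : Lext u w = {c}) :
    bilateralOrder u w = 0 := by
  rw [bilateralOrder, bext_eq_image_of_lext_eq_singleton hcur h,
    Set.ncard_image_of_injective _ (Prod.mk_right_injective c), h, Set.ncard_singleton]
  ring

theorem lext_eq_singleton_of_ncard_lt_two [Finite A] (hw : IsFactor u w)
    (h : (Lext u w).ncard < 2) :
    ∃ c, Lext u w = {c} :=
  Set.ncard_eq_one.1 <| le_antisymm (by omega)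
    ((Set.ncard_pos (Set.toFinite _)).2 (lext_nonempty hcur hw))

theorem bilateralOrder_eq_zero_of_not_bispecial [Finite A] (hw : IsFactor u w)
    (hb : ¬ Bispecial u w) :
    bilateralOrder u w = 0 := by
  simp only [Bispecial, hw, true_and, not_and_or, not_le] at hb
  rcases hb with hL | hR
  · obtain ⟨c, hc⟩ := lext_eq_singleton_of_ncard_lt_two hcur hw hL
    exact bilateralOrder_eq_zero_of_lext_eq_singleton hcur hc
  · rw [← lext_reverse hcur] at hR
    obtain ⟨c, hc⟩ :=
      lext_eq_singleton_of_ncard_lt_two hcur ((isFactor_reverse_iff hcur).2 hw) hR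
    rw [← bilateralOrder_reverse hcur]
    exact bilateralOrder_eq_zero_of_lext_eq_singleton hcur hc

end Extensions

section Excess

variable {A : Type*} [Finite A] {u : ℕ → A}

theorem ncard_pext_eq_one_of_not_bispecial (hcur : ClosedUnderReversal u) {w : List A}
    (hw : IsFactor u w) (hpal : w.reverse = w) (hb : ¬ Bispecial u w) :
    (Pext u w).ncard = 1 := by
  have hLR := lext_eq_rext_of_palindrome hcur hpal
  have hL : (Lext u w).ncard < 2 := by
    simp only [Bispecial, hw, true_and, not_and_or, not_le, ← hLR, or_self] at hb
    exact hb
  obtain ⟨c, hc⟩ := lext_eq_singleton_of_ncard_lt_two hcur hw hL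
  have hB : Bext u w = {(c, c)} := by
    rw [bext_eq_image_of_lext_eq_singleton hcur hc, ← hLR, hc, Set.image_singleton]
  have hP : Pext u w = {c :: (w ++ [c])} := by
    ext v
    simp only [Pext, Set.mem_ofPred_eq, Set.mem_singleton_iff]
    constructor
    · rintro ⟨a, rfl, ha⟩
      have : (a, a) ∈ Bext u w := ha
      rw [hB, Set.mem_singleton_iff, Prod.mk.injEq] at this
      rw [this.1]
    · rintro rfl
      exact ⟨c, rfl, show (c, c) ∈ Bext u w by rw [hB]; rfl⟩
  rw [hP, Set.ncard_singleton]

variable (u) in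
noncomputable def bilateralOrderExcess (w : List A) : ℤ :=
  bilateralOrder u w - if w.reverse = w then ((Pext u w).ncard : ℤ) - 1 else 0

theorem bilateralOrderExcess_eq_zero_of_not_bispecial (hcur : ClosedUnderReversal u)
    {w : List A} (hw : IsFactor u w) (hb : ¬ Bispecial u w) :
    bilateralOrderExcess u w = 0 := by
  rw [bilateralOrderExcess, bilateralOrder_eq_zero_of_not_bispecial hcur hw hb]
  split_ifs with hpal
  · rw [ncard_pext_eq_one_of_not_bispecial hcur hw hpal hb]
    simp
  · simp

theorem forall_bispecial_iff_bilateralOrderExcess_eq_zero (hcur : ClosedUnderReversal u) :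
    (∀ w : List A, Bispecial u w →
        (w.reverse ≠ w → bilateralOrder u w = 0) ∧
        (w.reverse = w → bilateralOrder u w = (Set.ncard (Pext u w) : ℤ) - 1)) ↔
      ∀ w, IsFactor u w → bilateralOrderExcess u w = 0 := by
  constructor
  · intro H w hw
    by_cases hb : Bispecial u w
    · rw [bilateralOrderExcess]
      split_ifs with hpal
      · rw [(H w hb).2 hpal, sub_self]
      · rw [(H w hb).1 hpal, sub_zero]
    · exact bilateralOrderExcess_eq_zero_of_not_bispecial hcur hw hb
  · intro H w hb
    have h := H w hb.1
    rw [bilateralOrderExcess] at h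
    constructor <;> intro hpal <;> simp only [hpal, if_true, if_false] at h <;> linarith

theorem sum_bilateralOrder (n : ℕ) :
    ∑ w ∈ factors u n, bilateralOrder u w =
      (complexity u (n + 2) : ℤ) - 2 * complexity u (n + 1) + complexity u n := by
  simp only [bilateralOrder, Finset.sum_add_distrib, Finset.sum_sub_distrib, ← Nat.cast_sum,
    ← card_factors_add_two_eq_sum_bext, ← card_factors_succ_eq_sum_rext,
    ← card_factors_succ_eq_sum_lext, complexity_eq_card, Finset.sum_const, nsmul_eq_mul, mul_one]
  ring

theorem sum_bilateralOrderExcess (n : ℕ) :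
    ∑ w ∈ factors u n, bilateralOrderExcess u w =
      (complexity u (n + 2) : ℤ) - 2 * complexity u (n + 1) + complexity u n
        - (palComplexity u (n + 2) - palComplexity u n) := by
  simp only [bilateralOrderExcess, Finset.sum_sub_distrib, sum_bilateralOrder,
    ← Finset.sum_filter, palComplexity_add_two, palComplexity_eq_card n]
  push_cast
  simp only [Finset.sum_const, nsmul_eq_mul, mul_one]

end Excess

section SmallLengths

variable {A : Type*} {u : ℕ → A}

theorem palComplexity_zero : palComplexity u 0 = 1 := by
  refine Set.ncard_eq_one.2 ⟨[], Set.ext fun w => ?_⟩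
  simp only [Set.mem_ofPred_eq, List.length_eq_zero_iff, Set.mem_singleton_iff]
  exact ⟨fun h => h.1, by rintro rfl; exact ⟨rfl, ⟨0, rfl⟩, rfl⟩⟩

theorem palComplexity_one [Fintype A] (hall : AllLettersOccur u) :
    palComplexity u 1 = Fintype.card A := by
  have : {w : List A | w.length = 1 ∧ IsFactor u w ∧ w.reverse = w} =
      Set.range fun a => [a] := by
    ext w
    simp only [Set.mem_ofPred_eq, Set.mem_range, List.length_eq_one_iff]
    constructor
    · rintro ⟨⟨a, rfl⟩, -⟩
      exact ⟨a, rfl⟩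
    · rintro ⟨a, rfl⟩
      obtain ⟨i, rfl⟩ := hall a
      exact ⟨⟨_, rfl⟩, ⟨i, by simp [OccursAt, word]⟩, rfl⟩
  rw [palComplexity, this, Set.ncard_range_of_injective fun a b h => by simpa using h,
    Nat.card_eq_fintype_card]

end SmallLengths

section Mirror

variable {A : Type*}

variable (A) in
def mirrorSetoid : Setoid (List A) where
  r v w := w = v ∨ w = v.reverse
  iseqv :=
    { refl := fun _ => Or.inl rfl
      symm := by rintro v w (rfl | rfl) <;> simp
      trans := by rintro v w x (rfl | rfl) (rfl | rfl) <;> simp }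

def mirror (v : List A) : Quotient (mirrorSetoid A) := Quotient.mk _ v

theorem mirror_eq_mirror_iff {v w : List A} : mirror v = mirror w ↔ w = v ∨ w = v.reverse :=
  Quotient.eq

theorem mirror_reverse (v : List A) : mirror v.reverse = mirror v :=
  mirror_eq_mirror_iff.2 (Or.inr (List.reverse_reverse v).symm)

def mirrorEnds : Quotient (mirrorSetoid A) → Sym2 (Quotient (mirrorSetoid A)) :=
  Quotient.lift (fun v => s(mirror v.dropLast, mirror v.tail)) <| by
    rintro v w (rfl | rfl)
    · rfl
    · simp only [List.dropLast_reverse, List.tail_reverse, mirror_reverse, Sym2.eq_swap]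

theorem mirrorEnds_mirror (v : List A) :
    mirrorEnds (mirror v) = s(mirror v.dropLast, mirror v.tail) :=
  rfl

theorem mirrorEnds_mirror_cons_append (a b : A) (w : List A) :
    mirrorEnds (mirror (a :: (w ++ [b]))) = s(mirror (a :: w), mirror (w ++ [b])) := by
  rw [mirrorEnds_mirror, List.tail_cons, ← List.cons_append, List.dropLast_concat]

theorem palindrome_of_mirror_cons_eq_mirror_append {a b : A} {w : List A}
    (h : mirror (a :: w) = mirror (w ++ [b])) : a = b ∧ w.reverse = w := by
  rcases mirror_eq_mirror_iff.1 h with h | h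
  · obtain ⟨hw, hab⟩ := List.eq_replicate_of_cons_eq_append_singleton h.symm
    exact ⟨hab, by rw [hw, List.reverse_replicate]⟩
  · obtain ⟨hw, hba⟩ := List.append_inj' (h.trans (List.reverse_cons ..)) rfl
    exact ⟨by simpa using hba.symm, hw.symm⟩

theorem eq_or_eq_swap_of_mirror_eq {p q : A × A} {w : List A}
    (h : mirror (p.1 :: (w ++ [p.2])) = mirror (q.1 :: (w ++ [q.2]))) :
    q = p ∨ (q = p.swap ∧ w.reverse = w) := by
  obtain ⟨a, b⟩ := p
  obtain ⟨a', b'⟩ := q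
  rcases mirror_eq_mirror_iff.1 h with h | h
  · left
    simpa using h
  · obtain ⟨rfl, hw, rfl⟩ : a' = b ∧ w = w.reverse ∧ b' = a := by simpa using h
    exact Or.inr ⟨rfl, hw.symm⟩

theorem two_mul_card_image_mirror {T : Finset (List A)} (hT : ∀ v ∈ T, v.reverse ∈ T) :
    2 * (T.image mirror).card = T.card + (T.filter fun v => v.reverse = v).card := by
  calc 2 * (T.image mirror).card = ∑ _c ∈ T.image mirror, 2 := by
        rw [Finset.sum_const, smul_eq_mul, mul_comm]
    _ = ∑ c ∈ T.image mirror, ∑ v ∈ T with mirror v = c,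
          (1 + if v.reverse = v then 1 else 0) := by
        refine Finset.sum_congr rfl fun c hc => ?_
        obtain ⟨v, hv, rfl⟩ := Finset.mem_image.1 hc
        have hfib : (T.filter fun x => mirror x = mirror v) = {v, v.reverse} := by
          ext x
          simp only [Finset.mem_filter, mirror_eq_mirror_iff, Finset.mem_insert,
            Finset.mem_singleton]
          constructor
          · rintro ⟨-, h | h⟩
            · exact Or.inl h.symm
            · exact Or.inr (by rw [h, List.reverse_reverse])
          · rintro (rfl | rfl)
            · exact ⟨hv, Or.inl rfl⟩
            · exact ⟨hT v hv, Or.inr (List.reverse_reverse v).symm⟩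
        rw [hfib]
        by_cases hpal : v.reverse = v
        · simp [hpal]
        · rw [Finset.sum_pair (Ne.symm hpal)]
          simp [hpal, eq_comm (a := v)]
    _ = ∑ v ∈ T, (1 + if v.reverse = v then 1 else 0) :=
        Finset.sum_fiberwise_of_maps_to (fun v hv => Finset.mem_image_of_mem _ hv) _
    _ = T.card + (T.filter fun v => v.reverse = v).card := by
        rw [Finset.sum_add_distrib, Finset.card_filter]
        simp

end Mirror

section Rauzy

variable {A : Type*} [Finite A] {u : ℕ → A}

theorem reverse_mem_factors (hcur : ClosedUnderReversal u) {n : ℕ} {v : List A}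
    (hv : v ∈ factors u n) : v.reverse ∈ factors u n := by
  obtain ⟨hlen, hv⟩ := mem_factors.1 hv
  exact mem_factors.2 ⟨by simp [hlen], hcur v hv⟩

variable (u) in
/-- The Rauzy graph of order `N` with every factor identified with its reversal and loops
removed: vertices are the classes of factors of length `N`, and the class of a factor `v` of
length `N + 1` is an edge joining the classes of its prefix and suffix of length `N`. -/
noncomputable def rauzyVertices (N : ℕ) : Finset (Quotient (mirrorSetoid A)) :=
  (factors u N).image mirror

variable (u) in
noncomputable def rauzyEdges (N : ℕ) : Finset (Quotient (mirrorSetoid A)) :=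
  ((factors u (N + 1)).image mirror).filter fun c => ¬ (mirrorEnds c).IsDiag

theorem two_mul_card_rauzyVertices (hcur : ClosedUnderReversal u) (N : ℕ) :
    2 * (rauzyVertices u N).card = complexity u N + palComplexity u N := by
  rw [rauzyVertices, two_mul_card_image_mirror fun _ => reverse_mem_factors hcur,
    complexity_eq_card, palComplexity_eq_card]

theorem two_mul_card_rauzyEdges_add_le (hcur : ClosedUnderReversal u) (N : ℕ) :
    2 * (rauzyEdges u N).card + palComplexity u (N + 1) ≤ complexity u (N + 1) := by
  have hK := two_mul_card_image_mirror fun _ => reverse_mem_factors hcur (n := N + 1)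
  have hsplit := Finset.card_filter_add_card_filter_not
    (s := (factors u (N + 1)).image mirror) fun c => (mirrorEnds c).IsDiag
  have hloops : ((factors u (N + 1)).filter fun v => v.reverse = v).card ≤
      (((factors u (N + 1)).image mirror).filter fun c => (mirrorEnds c).IsDiag).card := by
    refine Finset.card_le_card_of_injOn mirror (fun v hv => ?_) fun v hv v' hv' h => ?_
    · obtain ⟨hv, hpal⟩ := Finset.mem_filter.1 hv
      refine Finset.mem_filter.2 ⟨Finset.mem_image_of_mem _ hv, ?_⟩
      rw [mirrorEnds_mirror, Sym2.mk_isDiag_iff, ← hpal, List.tail_reverse, mirror_reverse,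
        hpal]
    · obtain ⟨-, hpal'⟩ := Finset.mem_filter.1 hv'
      rcases mirror_eq_mirror_iff.1 h with h | h
      · exact h.symm
      · rw [← hpal', h, List.reverse_reverse]
  rw [complexity_eq_card, palComplexity_eq_card, rauzyEdges]
  omega

theorem cutConnected_rauzy (hcur : ClosedUnderReversal u) (N : ℕ) :
    CutConnected (rauzyVertices u N) (rauzyEdges u N) mirrorEnds := by
  intro S hSV ⟨c, hc⟩ hSne
  obtain ⟨c', hc'V, hc'S⟩ := Finset.not_subset.1 fun h' => hSne (hSV.antisymm h')
  obtain ⟨x, hx, rfl⟩ := Finset.mem_image.1 (hSV hc)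
  obtain ⟨y, hy, rfl⟩ := Finset.mem_image.1 hc'V
  obtain ⟨hxN, i, hi⟩ := mem_factors.1 hx
  obtain ⟨hyN, hyf⟩ := mem_factors.1 hy
  obtain ⟨j, hij, hj⟩ := exists_occursAt_ge hcur hyf i
  rw [OccursAt, hxN] at hi
  rw [OccursAt, hyN] at hj
  subst hi hj
  have hV : ∀ t, mirror (word u t N) ∈ rauzyVertices u N := fun t =>
    Finset.mem_image_of_mem _ (mem_factors.2 ⟨length_word u t N, isFactor_word u t N⟩)
  by_contra hcross
  have hstep : ∀ t, mirror (word u t N) ∈ S → mirror (word u (t + 1) N) ∈ S := by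
    intro t ht
    by_contra ht'
    have hends : mirrorEnds (mirror (word u t (N + 1))) =
        s(mirror (word u t N), mirror (word u (t + 1) N)) := by
      rw [mirrorEnds_mirror, dropLast_word, tail_word]
    refine hcross ⟨mirror (word u t (N + 1)), Finset.mem_filter.2 ⟨?_, ?_⟩, _, ht, _,
      Finset.mem_sdiff.2 ⟨hV (t + 1), ht'⟩, hends⟩
    · exact Finset.mem_image_of_mem _
        (mem_factors.2 ⟨length_word u t (N + 1), isFactor_word u t (N + 1)⟩)
    · rw [hends, Sym2.mk_isDiag_iff]
      exact fun h => ht' (h ▸ ht)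
  exact hc'S (Nat.le_induction hc (fun t _ => hstep t) j hij)

theorem card_rauzyEdges_add_one_le {A : Type*} [Fintype A] {u : ℕ → A}
    (hcur : ClosedUnderReversal u)
    (hC : ∀ n : ℕ, complexity u n = (Fintype.card A - 1) * n + 1)
    (hP : ∀ n : ℕ, palComplexity u n + palComplexity u (n + 1) = Fintype.card A + 1)
    (N : ℕ) : (rauzyEdges u N).card + 1 ≤ (rauzyVertices u N).card := by
  have hV := two_mul_card_rauzyVertices hcur N
  have hE := two_mul_card_rauzyEdges_add_le hcur N
  have hCN : complexity u (N + 1) = complexity u N + (Fintype.card A - 1) := by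
    rw [hC, hC]
    ring
  have := hP N
  have : 0 < Fintype.card A := Fintype.card_pos_iff.2 ⟨u 0⟩
  omega

end Rauzy

section ExtensionEdges

variable {A : Type*} [Finite A] {u : ℕ → A} {w : List A}

/-- The classes of the extensions `a w b`, `(a, b) ∈ S`, are edges of the Rauzy graph of order
`|w| + 1`, and the right-hand side counts their endpoints. -/
theorem card_image_extension_add_one_le (hcur : ClosedUnderReversal u)
    (htree : (rauzyEdges u (w.length + 1)).card + 1 ≤ (rauzyVertices u (w.length + 1)).card)
    {S : Finset (A × A)} (hSB : ∀ p ∈ S, p ∈ Bext u w)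
    (hS : ∀ p ∈ S, mirror (p.1 :: w) ≠ mirror (w ++ [p.2])) (hSne : S.Nonempty) :
    (S.image fun p => mirror (p.1 :: (w ++ [p.2]))).card + 1 ≤
      (S.image (fun p => mirror (p.1 :: w)) ∪ S.image fun p => mirror (w ++ [p.2])).card := by
  have hvert : ∀ v, IsFactor u v → v.length = w.length + 1 →
      mirror v ∈ rauzyVertices u (w.length + 1) := fun v hv hlen =>
    Finset.mem_image_of_mem _ (mem_factors.2 ⟨hlen, hv⟩)
  refine (cutConnected_rauzy hcur _).card_add_one_le_card_of_ends_subset htree ?_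
    (hSne.image _) ?_ ?_
  · simp only [Finset.image_subset_iff]
    intro p hp
    refine Finset.mem_filter.2
      ⟨Finset.mem_image_of_mem _ (mem_factors.2 ⟨by simp, hSB p hp⟩), ?_⟩
    rw [mirrorEnds_mirror_cons_append, Sym2.mk_isDiag_iff]
    exact hS p hp
  · simp only [Finset.union_subset_iff, Finset.image_subset_iff]
    exact ⟨fun p hp => hvert _ (mem_lext_of_mem_bext (hSB p hp)) (by simp),
      fun p hp => hvert _ (mem_rext_of_mem_bext (hSB p hp)) (by simp)⟩
  · simp only [Finset.forall_mem_image, mirrorEnds_mirror_cons_append, Sym2.mem_iff]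
    rintro p hp x (rfl | rfl)
    · exact Finset.mem_union_left _ (Finset.mem_image_of_mem _ hp)
    · exact Finset.mem_union_right _ (Finset.mem_image_of_mem _ hp)

variable (hcur : ClosedUnderReversal u)
  (htree : (rauzyEdges u (w.length + 1)).card + 1 ≤ (rauzyVertices u (w.length + 1)).card)
include hcur htree

theorem ncard_bext_add_one_le (hw : IsFactor u w) (hnp : w.reverse ≠ w) :
    (Bext u w).ncard + 1 ≤ (Lext u w).ncard + (Rext u w).ncard := by
  set S := (Set.toFinite (Bext u w)).toFinset
  have hSB : ∀ p ∈ S, p ∈ Bext u w := fun p hp => (Set.Finite.mem_toFinset _).1 hp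
  have hSne : S.Nonempty := by
    obtain ⟨a, ha⟩ := lext_nonempty hcur hw
    obtain ⟨b, hb⟩ := IsFactor.exists_append_singleton ha
    exact ⟨(a, b), (Set.Finite.mem_toFinset _).2 hb⟩
  have key := card_image_extension_add_one_le hcur htree hSB
    (fun p _ h => hnp (palindrome_of_mirror_cons_eq_mirror_append h).2) hSne
  rw [Finset.card_image_of_injOn fun p _ q _ h =>
    ((eq_or_eq_swap_of_mirror_eq h).resolve_right fun h' => hnp h'.2).symm] at key
  have hW : (S.image (fun p => mirror (p.1 :: w)) ∪ S.image fun p => mirror (w ++ [p.2])) ⊆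
      (Set.toFinite (Lext u w)).toFinset.image (fun a => mirror (a :: w)) ∪
        (Set.toFinite (Rext u w)).toFinset.image fun b => mirror (w ++ [b]) := by
    refine Finset.union_subset_union (Finset.image_subset_iff.2 fun p hp => ?_)
      (Finset.image_subset_iff.2 fun p hp => ?_)
    · exact Finset.mem_image_of_mem _
        ((Set.Finite.mem_toFinset _).2 (mem_lext_of_mem_bext (hSB p hp)))
    · exact Finset.mem_image_of_mem _
        ((Set.Finite.mem_toFinset _).2 (mem_rext_of_mem_bext (hSB p hp)))
  rw [Set.ncard_eq_toFinset_card (Bext u w), Set.ncard_eq_toFinset_card (Lext u w),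
    Set.ncard_eq_toFinset_card (Rext u w)]
  exact key.trans ((Finset.card_le_card hW).trans ((Finset.card_union_le _ _).trans
    (add_le_add Finset.card_image_le Finset.card_image_le)))

theorem ncard_bext_add_two_le_of_palindrome (hw : IsFactor u w) (hpal : w.reverse = w) :
    (Bext u w).ncard + 2 ≤ (Pext u w).ncard + 2 * (Lext u w).ncard := by
  set S := (Set.toFinite (Bext u w)).toFinset.filter fun p => p.1 ≠ p.2
  have hSB : ∀ p ∈ S, p ∈ Bext u w := fun p hp =>
    (Set.Finite.mem_toFinset _).1 (Finset.mem_filter.1 hp).1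
  have hB : (Bext u w).ncard = (Pext u w).ncard + S.card := ncard_bext_eq_ncard_pext_add w
  have hL : 1 ≤ (Lext u w).ncard := (Set.ncard_pos (Set.toFinite _)).2 (lext_nonempty hcur hw)
  suffices S.card + 2 ≤ 2 * (Lext u w).ncard by omega
  obtain hS | hS := S.eq_empty_or_nonempty
  · rw [hS, Finset.card_empty]
    omega
  have key := card_image_extension_add_one_le hcur htree hSB
    (fun p hp h => (Finset.mem_filter.1 hp).2 (palindrome_of_mirror_cons_eq_mirror_append h).1) hS
  have hfib : S.card ≤ 2 * (S.image fun p => mirror (p.1 :: (w ++ [p.2]))).card := by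
    refine Finset.card_le_mul_card_image S 2 fun c hc => ?_
    obtain ⟨q, -, rfl⟩ := Finset.mem_image.1 hc
    refine (Finset.card_le_card fun p hp => ?_).trans (Finset.card_le_two (a := q) (b := q.swap))
    rcases eq_or_eq_swap_of_mirror_eq (Finset.mem_filter.1 hp).2.symm with h | h
    · simp [h]
    · simp [h.1]
  have hW : (S.image (fun p => mirror (p.1 :: w)) ∪ S.image fun p => mirror (w ++ [p.2])) ⊆
      (Set.toFinite (Lext u w)).toFinset.image fun a => mirror (a :: w) := by
    refine Finset.union_subset (Finset.image_subset_iff.2 fun p hp => ?_)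
      (Finset.image_subset_iff.2 fun p hp => ?_)
    · exact Finset.mem_image_of_mem _
        ((Set.Finite.mem_toFinset _).2 (mem_lext_of_mem_bext (hSB p hp)))
    · have : mirror (w ++ [p.2]) = mirror (p.2 :: w) := by
        rw [← mirror_reverse]
        simp [hpal]
      rw [this]
      refine Finset.mem_image_of_mem _ ((Set.Finite.mem_toFinset _).2 ?_)
      rw [lext_eq_rext_of_palindrome hcur hpal]
      exact mem_rext_of_mem_bext (hSB p hp)
  have := (Finset.card_le_card hW).trans Finset.card_image_le
  rw [← Set.ncard_eq_toFinset_card] at this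
  omega

theorem bilateralOrderExcess_nonpos (hw : IsFactor u w) : bilateralOrderExcess u w ≤ 0 := by
  rw [bilateralOrderExcess, bilateralOrder]
  split_ifs with hpal
  · have := ncard_bext_add_two_le_of_palindrome hcur htree hw hpal
    rw [← lext_eq_rext_of_palindrome hcur hpal]
    omega
  · have := ncard_bext_add_one_le hcur htree hw hpal
    omega

end ExtensionEdges

/-- For an infinite word over a `k`-letter alphabet with language
closed under reversal and `C(n) = (k−1)n + 1` for all `n`: Property P (namely
`P(n) + P(n+1) = k + 1` for all `n`) holds iff every bispecial factor `w`
satisfies `b(w) = 0` when `w` is non-palindromic and `b(w) = #Pext(w) − 1`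
when `w` is a palindrome. -/
theorem stmt19 {A : Type*} [Fintype A] (u : ℕ → A)
    (hall : AllLettersOccur u)
    (hcur : ClosedUnderReversal u)
    (hC : ∀ n : ℕ, complexity u n = (Fintype.card A - 1) * n + 1) :
    (∀ n : ℕ, palComplexity u n + palComplexity u (n + 1) = Fintype.card A + 1) ↔
      ∀ w : List A, Bispecial u w →
        (w.reverse ≠ w → bilateralOrder u w = 0) ∧
        (w.reverse = w → bilateralOrder u w = (Set.ncard (Pext u w) : ℤ) - 1) := by
  have hsum : ∀ n, ∑ w ∈ factors u n, bilateralOrderExcess u w =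
      (palComplexity u n : ℤ) - palComplexity u (n + 2) := by
    intro n
    rw [sum_bilateralOrderExcess, hC, hC, hC]
    push_cast
    ring
  rw [forall_bispecial_iff_bilateralOrderExcess_eq_zero hcur]
  constructor
  · intro hP w hw
    have hP2 : palComplexity u (w.length + 2) = palComplexity u w.length := by
      have h0 := hP w.length
      have h1 : palComplexity u (w.length + 1) + palComplexity u (w.length + 2) = _ :=
        hP (w.length + 1)
      omega
    refine (Finset.sum_eq_zero_iff_of_nonpos fun v hv => ?_).1
      (by rw [hsum, hP2, sub_self]) w (mem_factors.2 ⟨rfl, hw⟩)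
    exact bilateralOrderExcess_nonpos hcur (card_rauzyEdges_add_one_le hcur hC hP _)
      (mem_factors.1 hv).2
  · intro H n
    induction n with
    | zero => rw [palComplexity_zero, palComplexity_one hall, add_comm]
    | succ n ih =>
      have := hsum n
      rw [Finset.sum_eq_zero fun w hw => H w (mem_factors.1 hw).2] at this
      show palComplexity u (n + 1) + palComplexity u (n + 2) = _
      omega
end
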